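/- With h as in the previous statement, for every λ with 0 < λ ≤ 1, the curve t ↦ h(λ, t) for t ≥ 4 satisfies: both coordinates tend to +∞ as t → +∞, and their ratio (first coordinate over second) tends to λ/2. Consequently the point (0 : λ/2 : 1) ∈ ℝP² lies in the set of points at infinity of h({0 < x ≤ 1, 4 ≤ y}); hence {(0:u:1) : 0 ≤ u ≤ 1/2} is contained in (h(A₁))_∞. -/

import Mathlib

open Projectivization Filter Topology Set

noncomputable section

instance (K V : Type*) [DivisionRing K] [AddCommGroup V] [Module K V] [TopologicalSpace V] :
    TopologicalSpace (Projectivization K V) := by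
  unfold Projectivization; infer_instance

/-- The embedding of the affine plane `ℝ²` into `ℝP²` as the chart `{x₀ = 1}`. -/
def embR2 (p : ℝ × ℝ) : Projectivization ℝ (Fin 3 → ℝ) :=
  Projectivization.mk ℝ ![1, p.1, p.2] (by intro h; have := congrFun h 0; simp at this)

/-- The line at infinity `{x₀ = 0}` of `ℝP²`. -/
def lineAtInf : Set (Projectivization ℝ (Fin 3 → ℝ)) := {q | q.rep 0 = 0}

/-- The set of points at infinity of `S ⊆ ℝ²`: the closure of `S` in `ℝP²`
intersected with the line at infinity. -/
def ptsAtInf (S : Set (ℝ × ℝ)) : Set (Projectivization ℝ (Fin 3 → ℝ)) :=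
  closure (embR2 '' S) ∩ lineAtInf

/-- The regular map `h` of Lemma 4.3. -/
def hMap (p : ℝ × ℝ) : ℝ × ℝ :=
  (p.1 * ((p.2 - 1) ^ 2 * p.2 ^ 2 + 2 * (p.1 - 1) ^ 2 * p.1) /
     (1 + p.1 * (p.1 - 1) ^ 2 * p.2 * (p.2 - 1) ^ 2),
   p.2 * ((p.1 - 1) ^ 2 * p.1 ^ 2 + 2 * (p.2 - 1) ^ 2 * p.2) /
     (1 + p.1 * (p.1 - 1) ^ 2 * p.2 * (p.2 - 1) ^ 2))

/-- The strip `A₁ = {0 < x ≤ 1, 4 ≤ y}`. -/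
def A1 : Set (ℝ × ℝ) := {p | 0 < p.1 ∧ p.1 ≤ 1 ∧ 4 ≤ p.2}

/-! Along `t ↦ h(λ, t)` both coordinates are dominated by their `t⁴` terms, `λ t⁴` and `2 t⁴`,
over the common denominator, so the slope `h₁ / h₂` tends to `λ / 2` while `h₂ ≥ t`. In the chart
`(x, y) ↦ (1/y : x/y : 1)` the curve therefore converges to `(0 : λ/2 : 1)`. Taking `λ = 2u` gives
every `(0 : u : 1)` with `0 < u ≤ 1/2`; the endpoint `u = 0` follows because the set of points at
infinity is closed. -/

namespace Projectivization

variable {α K V : Type*} [DivisionRing K] [AddCommGroup V] [Module K V] [TopologicalSpace V]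

theorem tendsto_mk {f : Filter α} {v : α → V} {w : V} (hv : ∀ a, v a ≠ 0) (hw : w ≠ 0)
    (h : Tendsto v f (𝓝 w)) :
    Tendsto (fun a => mk K (v a) (hv a)) f (𝓝 (mk K w hw)) :=
  (continuous_quotient_mk' (s := projectivizationSetoid K V)).continuousAt.tendsto.comp
    (tendsto_subtype_rng.mpr h)

end Projectivization

theorem vec_ne_zero (a b : ℝ) : (![a, b, 1] : Fin 3 → ℝ) ≠ 0 := by
  intro h; simpa using congrFun h 2

theorem mk_mem_lineAtInf_iff (v : Fin 3 → ℝ) (hv : v ≠ 0) :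
    Projectivization.mk ℝ v hv ∈ lineAtInf ↔ v 0 = 0 := by
  obtain ⟨a, ha⟩ := exists_smul_eq_mk_rep ℝ v hv
  simp [lineAtInf, ← ha, Units.smul_def]

theorem isClosed_lineAtInf : IsClosed lineAtInf := by
  have hq : IsQuotientMap (Projectivization.mk' ℝ : {v : Fin 3 → ℝ // v ≠ 0} → _) :=
    isQuotientMap_quotient_mk'
  have hpre : Projectivization.mk' ℝ ⁻¹' lineAtInf = {v : {v : Fin 3 → ℝ // v ≠ 0} | v.1 0 = 0} :=
    Set.ext fun v => mk_mem_lineAtInf_iff v.1 v.2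
  rw [← hq.isClosed_preimage, hpre]
  exact isClosed_eq ((continuous_apply 0).comp continuous_subtype_val) continuous_const

theorem isClosed_ptsAtInf (S : Set (ℝ × ℝ)) : IsClosed (ptsAtInf S) :=
  isClosed_closure.inter isClosed_lineAtInf

theorem embR2_eq_mk {p : ℝ × ℝ} (hp : p.2 ≠ 0) :
    embR2 p = Projectivization.mk ℝ ![1 / p.2, p.1 / p.2, 1] (vec_ne_zero _ _) := by
  rw [embR2, mk_eq_mk_iff]
  refine ⟨Units.mk0 p.2 hp, funext fun i => ?_⟩
  fin_cases i <;> simp [Units.smul_def, hp, mul_div_cancel₀]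

theorem mk_mem_ptsAtInf_of_tendsto {α : Type*} {S : Set (ℝ × ℝ)} {f : Filter α} [f.NeBot] {γ : α → ℝ × ℝ}
    {u : ℝ} (hS : ∀ᶠ a in f, γ a ∈ S) (hsnd : Tendsto (fun a => (γ a).2) f atTop)
    (hslope : Tendsto (fun a => (γ a).1 / (γ a).2) f (𝓝 u)) :
    Projectivization.mk ℝ ![0, u, 1] (vec_ne_zero _ _) ∈ ptsAtInf S := by
  have hvec : Tendsto (fun a => ![1 / (γ a).2, (γ a).1 / (γ a).2, 1]) f (𝓝 ![0, u, 1]) := by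
    rw [tendsto_pi_nhds]
    intro i
    fin_cases i
    · simpa [one_div, Function.comp_def] using tendsto_inv_atTop_zero.comp hsnd
    · exact hslope
    · exact tendsto_const_nhds
  have hemb : Tendsto (fun a => embR2 (γ a)) f
      (𝓝 (Projectivization.mk ℝ ![0, u, 1] (vec_ne_zero _ _))) := by
    refine (tendsto_mk (fun a => vec_ne_zero _ _) _ hvec).congr' ?_
    filter_upwards [hsnd.eventually_gt_atTop 0] with a ha
    exact (embR2_eq_mk ha.ne').symm
  refine ⟨mem_closure_of_tendsto hemb ?_, (mk_mem_lineAtInf_iff _ _).mpr rfl⟩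
  filter_upwards [hS] with a ha
  exact mem_image_of_mem _ ha

section hMap

variable {x : ℝ}

theorem le_hMap_snd (hx0 : 0 ≤ x) (hx1 : x ≤ 1) {y : ℝ} (hy : 2 ≤ y) : y ≤ (hMap (x, y)).2 := by
  have hc : x * (x - 1) ^ 2 ≤ 1 := by nlinarith [mul_nonneg hx0 (sq_nonneg (x - 1))]
  have hs : 1 ≤ y * (y - 1) ^ 2 := by nlinarith
  have hD : 0 < 1 + x * (x - 1) ^ 2 * y * (y - 1) ^ 2 := by
    have : 0 ≤ y := by linarith
    positivity
  rw [hMap, le_div_iff₀ hD]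
  -- `y (1 + c s) ≤ 2 y s ≤ y ((x - 1)² x² + 2 s)` for `c = x (x - 1)² ≤ 1 ≤ s = y (y - 1)²`
  nlinarith [mul_nonneg (mul_nonneg (by linarith : (0 : ℝ) ≤ y) (by linarith : 0 ≤ y * (y - 1) ^ 2))
    (sub_nonneg.mpr hc), mul_nonneg (by linarith : (0 : ℝ) ≤ y) (sq_nonneg ((x - 1) * x))]

theorem hMap_fst_div_snd (hx : 0 ≤ x) {y : ℝ} (hy : 0 < y) :
    (hMap (x, y)).1 / (hMap (x, y)).2 =
      x * ((1 - y⁻¹) ^ 2 + 2 * (x - 1) ^ 2 * x * y⁻¹ ^ 4) /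
        ((x - 1) ^ 2 * x ^ 2 * y⁻¹ ^ 3 + 2 * (1 - y⁻¹) ^ 2) := by
  have hD : 1 + x * (x - 1) ^ 2 * y * (y - 1) ^ 2 ≠ 0 := by positivity
  rw [hMap, div_div_div_cancel_right₀ hD]
  field_simp

theorem tendsto_hMap_snd (hx0 : 0 ≤ x) (hx1 : x ≤ 1) :
    Tendsto (fun y => (hMap (x, y)).2) atTop atTop :=
  tendsto_atTop_mono' _ ((eventually_ge_atTop 2).mono fun _ => le_hMap_snd hx0 hx1) tendsto_id

theorem tendsto_hMap_fst_div_snd (hx : 0 ≤ x) :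
    Tendsto (fun y => (hMap (x, y)).1 / (hMap (x, y)).2) atTop (𝓝 (x / 2)) := by
  have hcont : ContinuousAt (fun s : ℝ => x * ((1 - s) ^ 2 + 2 * (x - 1) ^ 2 * x * s ^ 4) /
      ((x - 1) ^ 2 * x ^ 2 * s ^ 3 + 2 * (1 - s) ^ 2)) 0 :=
    ContinuousAt.div (by fun_prop) (by fun_prop) (by norm_num)
  have hlim := hcont.tendsto.comp tendsto_inv_atTop_zero
  norm_num at hlim
  refine hlim.congr' ?_
  filter_upwards [eventually_gt_atTop 0] with y hy
  exact (hMap_fst_div_snd hx hy).symm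

theorem tendsto_hMap_fst (hx0 : 0 < x) (hx1 : x ≤ 1) :
    Tendsto (fun y => (hMap (x, y)).1) atTop atTop := by
  refine ((tendsto_hMap_fst_div_snd hx0.le).pos_mul_atTop (by positivity)
    (tendsto_hMap_snd hx0.le hx1)).congr' ?_
  filter_upwards [(tendsto_hMap_snd hx0.le hx1).eventually_gt_atTop 0] with y hy
  exact div_mul_cancel₀ _ hy.ne'

end hMap

theorem mk_mem_ptsAtInf_hMap_A1 {l : ℝ} (hl0 : 0 < l) (hl1 : l ≤ 1) :
    Projectivization.mk ℝ ![0, l / 2, 1] (vec_ne_zero _ _) ∈ ptsAtInf (hMap '' A1) :=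
  mk_mem_ptsAtInf_of_tendsto
    ((eventually_ge_atTop 4).mono fun _ ht => mem_image_of_mem _ ⟨hl0, hl1, ht⟩)
    (tendsto_hMap_snd hl0.le hl1) (tendsto_hMap_fst_div_snd hl0.le)

theorem mk_mem_ptsAtInf_hMap_A1_of_mem_Icc {u : ℝ} (hu : u ∈ Icc (0 : ℝ) (1 / 2)) :
    Projectivization.mk ℝ ![0, u, 1] (vec_ne_zero _ _) ∈ ptsAtInf (hMap '' A1) := by
  set p : ℝ → Projectivization ℝ (Fin 3 → ℝ) := fun u => Projectivization.mk ℝ ![0, u, 1]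
    (vec_ne_zero _ _)
  have hp : Continuous p := continuous_iff_continuousAt.mpr fun u =>
    tendsto_mk _ _ (by fun_prop : Continuous fun u : ℝ => ![(0 : ℝ), u, 1]).continuousAt
  have hIoc : p '' Ioc 0 (1 / 2) ⊆ ptsAtInf (hMap '' A1) := by
    rintro _ ⟨u, ⟨hu0, hu1⟩, rfl⟩
    simpa [p] using mk_mem_ptsAtInf_hMap_A1 (l := 2 * u) (by positivity) (by linarith)
  have hIcc := (image_closure_subset_closure_image hp).trans
    (closure_minimal hIoc (isClosed_ptsAtInf _))
  rw [closure_Ioc (by norm_num)] at hIcc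
  exact hIcc (mem_image_of_mem p hu)

theorem stmt18 (l : ℝ) (hl0 : 0 < l) (hl1 : l ≤ 1) :
    Tendsto (fun t : ℝ => (hMap (l, t)).1) atTop atTop ∧
    Tendsto (fun t : ℝ => (hMap (l, t)).2) atTop atTop ∧
    Tendsto (fun t : ℝ => (hMap (l, t)).1 / (hMap (l, t)).2) atTop (𝓝 (l / 2)) ∧
    Projectivization.mk ℝ ![0, l / 2, 1] (by intro hv; have := congrFun hv 2; simp at this) ∈
      ptsAtInf (hMap '' A1) ∧
    {q | ∃ u : ℝ, 0 ≤ u ∧ u ≤ 1 / 2 ∧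
        q = Projectivization.mk ℝ ![0, u, 1]
          (by intro hv; have := congrFun hv 2; simp at this)} ⊆
      ptsAtInf (hMap '' A1) := by
  refine ⟨tendsto_hMap_fst hl0 hl1, tendsto_hMap_snd hl0.le hl1, tendsto_hMap_fst_div_snd hl0.le,
    mk_mem_ptsAtInf_hMap_A1 hl0 hl1, ?_⟩
  rintro _ ⟨u, hu0, hu1, rfl⟩
  exact mk_mem_ptsAtInf_hMap_A1_of_mem_Icc ⟨hu0, hu1⟩

end
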